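/- Define M : ℤ × ℤ → ℤ by: M(i,j) = 2 if 3i + j ≡ 9 (mod 10); otherwise M(i,j) = 0 if i + j is odd; otherwise M(i,j) = −1 if j − i ≡ 0 (mod 4) and M(i,j) = 1 if j − i ≡ 2 (mod 4). Then for all i, j ∈ ℤ, the entry M(i,j) is wild if and only if i + j is odd and 3i + j ≢ 9 (mod 10); that is, the wild entries of M are exactly its zero entries. -/

import Mathlib

/-- An SL2-tiling over a commutative ring `R`. -/
def IsSL2Tiling {R : Type*} [CommRing R] (m : ℤ × ℤ → R) : Prop :=
  ∀ i j : ℤ, m (i, j) * m (i + 1, j + 1) - m (i, j + 1) * m (i + 1, j) = 1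

/-- The determinant of the 3×3 block of `m` centred at `(i, j)`. -/
def nbhdDet {R : Type*} [CommRing R] (m : ℤ × ℤ → R) (i j : ℤ) : R :=
  (Matrix.of fun u v : Fin 3 => m (i + ((u : ℕ) : ℤ) - 1, j + ((v : ℕ) : ℤ) - 1)).det

/-- The entry `m (i, j)` is wild if the surrounding 3×3 determinant is nonzero. -/
def IsWild {R : Type*} [CommRing R] (m : ℤ × ℤ → R) (i j : ℤ) : Prop :=
  nbhdDet m i j ≠ 0

/-- The anti-periodic tiling by the 2×2 identity matrix, modified by placing the nonzero
entry `2` at each point of the sublattice `{(i, j) : 3i + j ≡ 9 (mod 10)}`. -/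
def Mex : ℤ × ℤ → ℤ := fun p =>
  if (3 * p.1 + p.2) % 10 = 9 then 2
  else if (p.1 + p.2) % 2 = 1 then 0
  else if (p.2 - p.1) % 4 = 0 then -1 else 1

/-!
Over a domain, Desnanot–Jacobi condensation of the 3×3 block of an SL2-tiling gives
`det · m(i,j) = 1 · 1 - 1 · 1 = 0`, so only zero entries can be wild; and around a zero entry the
four unimodular 2×2 minors collapse the determinant to the sum of the four diagonal neighbours.
The zero entries of `Mex` are the odd positions off the sublattice. Their diagonal neighbours are
odd positions whose values of `3i + j` are the four other odd residues mod 10, so exactly one of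
them carries a `2` and the sum is `2`.
-/

variable {R : Type*} [CommRing R]

theorem nbhdDet_eq (m : ℤ × ℤ → R) (i j : ℤ) :
    nbhdDet m i j =
      m (i - 1, j - 1) * (m (i, j) * m (i + 1, j + 1) - m (i, j + 1) * m (i + 1, j))
      - m (i - 1, j) * (m (i, j - 1) * m (i + 1, j + 1) - m (i, j + 1) * m (i + 1, j - 1))
      + m (i - 1, j + 1) * (m (i, j - 1) * m (i + 1, j) - m (i, j) * m (i + 1, j - 1)) := by
  have h : ∀ x : ℤ, x + 2 - 1 = x + 1 := fun x => by ring
  simp only [nbhdDet, Matrix.det_fin_three, Matrix.of_apply, Fin.coe_ofNat_eq_mod, Nat.zero_mod,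
    Nat.one_mod, Nat.mod_succ, Nat.cast_zero, Nat.cast_one, Nat.cast_ofNat, add_zero,
    add_sub_cancel_right, h]
  ring

namespace IsSL2Tiling

variable {m : ℤ × ℤ → R}

theorem nbhdDet_mul_eq_zero (hm : IsSL2Tiling m) (i j : ℤ) : nbhdDet m i j * m (i, j) = 0 := by
  have h₁ := hm (i - 1) (j - 1)
  have h₂ := hm (i - 1) j
  have h₃ := hm i (j - 1)
  have h₄ := hm i j
  simp only [sub_add_cancel] at h₁ h₂ h₃ h₄
  rw [nbhdDet_eq]
  -- Desnanot–Jacobi: the product is a difference of products of adjacent 2×2 minors, all equal to 1.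
  linear_combination (m (i, j) * m (i + 1, j + 1) - m (i, j + 1) * m (i + 1, j)) * h₁ + h₄
    - (m (i, j - 1) * m (i + 1, j) - m (i, j) * m (i + 1, j - 1)) * h₂ - h₃

theorem nbhdDet_of_eq_zero (hm : IsSL2Tiling m) {i j : ℤ} (h₀ : m (i, j) = 0) :
    nbhdDet m i j = m (i - 1, j - 1) + m (i - 1, j + 1) + m (i + 1, j - 1) + m (i + 1, j + 1) := by
  have h₁ := hm (i - 1) (j - 1)
  have h₂ := hm (i - 1) j
  have h₃ := hm i (j - 1)
  have h₄ := hm i j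
  simp only [sub_add_cancel, h₀] at h₁ h₂ h₃ h₄
  rw [nbhdDet_eq, h₀]
  linear_combination m (i - 1, j - 1) * h₄ + m (i + 1, j + 1) * h₁ + m (i + 1, j - 1) * h₂
    + m (i - 1, j + 1) * h₃

theorem isWild_iff [IsDomain R] (hm : IsSL2Tiling m) (i j : ℤ) :
    IsWild m i j ↔ m (i, j) = 0 ∧
      m (i - 1, j - 1) + m (i - 1, j + 1) + m (i + 1, j - 1) + m (i + 1, j + 1) ≠ 0 := by
  by_cases h₀ : m (i, j) = 0
  · simp [IsWild, hm.nbhdDet_of_eq_zero h₀, h₀]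
  · simpa [IsWild, h₀] using (mul_eq_zero.mp (hm.nbhdDet_mul_eq_zero i j)).resolve_right h₀

end IsSL2Tiling

theorem Mex_of_odd {i j : ℤ} (h : (i + j) % 2 = 1) :
    Mex (i, j) = if (3 * i + j) % 10 = 9 then 2 else 0 := by
  simp only [Mex, h, if_true]

theorem Mex_of_even {i j : ℤ} (h : (i + j) % 2 = 0) :
    Mex (i, j) = if (j - i) % 4 = 0 then -1 else 1 := by
  have h9 : (3 * i + j) % 10 ≠ 9 := by omega
  simp only [Mex, h9, h, if_false]
  norm_num

theorem Mex_isSL2Tiling : IsSL2Tiling Mex := by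
  intro i j
  -- The 2s lie on odd positions, at most one in each 2×2 block; the other diagonal of the block
  -- joins two ±1 entries, equal along the main direction and opposite along the other.
  rcases Int.emod_two_eq_zero_or_one (i + j) with h | h
  · rw [Mex_of_even h, Mex_of_even (by omega), Mex_of_odd (by omega), Mex_of_odd (by omega)]
    split_ifs <;> omega
  · rw [Mex_of_odd h, Mex_of_odd (by omega), Mex_of_even (by omega), Mex_of_even (by omega)]
    split_ifs <;> omega

theorem Mex_eq_zero_iff (i j : ℤ) : Mex (i, j) = 0 ↔ (i + j) % 2 = 1 ∧ (3 * i + j) % 10 ≠ 9 := by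
  rcases Int.emod_two_eq_zero_or_one (i + j) with h | h
  · rw [Mex_of_even h]
    split_ifs <;> simp [h]
  · rw [Mex_of_odd h]
    split_ifs <;> simp_all

theorem Mex_corner_sum {i j : ℤ} (hodd : (i + j) % 2 = 1) (h9 : (3 * i + j) % 10 ≠ 9) :
    Mex (i - 1, j - 1) + Mex (i - 1, j + 1) + Mex (i + 1, j - 1) + Mex (i + 1, j + 1) = 2 := by
  rw [Mex_of_odd (by omega), Mex_of_odd (by omega), Mex_of_odd (by omega), Mex_of_odd (by omega)]
  split_ifs <;> omega

theorem Mex_wild_iff (i j : ℤ) :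
    IsWild Mex i j ↔ ((i + j) % 2 = 1 ∧ (3 * i + j) % 10 ≠ 9) := by
  rw [Mex_isSL2Tiling.isWild_iff, Mex_eq_zero_iff]
  exact and_iff_left_of_imp fun h => by rw [Mex_corner_sum h.1 h.2]; norm_num
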